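/- Let T be a quasitriangular bounded linear operator on a complex Hilbert space H with associated filtration {P_n} (so ‖(I−P_n) T P_n‖ → 0), and let T_n = P_n T restricted to Ran P_n. Then the functions j_{T_n} converge to j_T uniformly on all of ℂ. -/

import Mathlib

open Filter ContinuousLinearMap

/-- The injectivity radius `j_T(z) = inf {‖(T - z)h‖ : ‖h‖ = 1}`. -/
noncomputable def injRad {H : Type*} [NormedAddCommGroup H] [InnerProductSpace ℂ H]
    (T : H →L[ℂ] H) (z : ℂ) : ℝ :=
  sInf {r : ℝ | ∃ h : H, ‖h‖ = 1 ∧ r = ‖T h - z • h‖}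

/-- `j_{Tₙ}(z) = inf {‖Pₙ T h - z h‖ : h ∈ Ran Pₙ, ‖h‖ = 1}` for the finite section
`Tₙ = Pₙ T|_{Ran Pₙ}`. -/
noncomputable def injRadSec {H : Type*} [NormedAddCommGroup H] [InnerProductSpace ℂ H]
    (T P : H →L[ℂ] H) (z : ℂ) : ℝ :=
  sInf {r : ℝ | ∃ h : H, h ∈ LinearMap.range (P : H →ₗ[ℂ] H) ∧ ‖h‖ = 1 ∧ r = ‖P (T h) - z • h‖}

/-- A filtration: an increasing sequence of finite-rank orthogonal projections
whose ranges have dense union. -/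
structure Filtration (H : Type*) [NormedAddCommGroup H] [InnerProductSpace ℂ H]
    [CompleteSpace H] where
  P : ℕ → H →L[ℂ] H
  idem : ∀ n, (P n) ∘L (P n) = P n
  selfadj : ∀ n, IsSelfAdjoint (P n)
  finiteRank : ∀ n, FiniteDimensional ℂ (LinearMap.range (P n : H →ₗ[ℂ] H))
  mono : ∀ n, LinearMap.range (P n : H →ₗ[ℂ] H) ≤ LinearMap.range (P (n + 1) : H →ₗ[ℂ] H)
  dense : Dense (⋃ n, (LinearMap.range (P n : H →ₗ[ℂ] H) : Set H))

/-!
On a bounded disc the convergence comes from compactness: a near-minimising unit vector for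
`j_T(z₀)` is approximated by unit vectors of some `Ran Pₘ`, and all the functions involved are
1-Lipschitz in `z`. Far out, `t ↦ ‖(T - t w) h‖ - t` is nonincreasing and, once `t ≥ 2‖T‖`,
stays within `‖T‖² / t` of its limit `-re ⟪w h, T h⟫`; so for `|z| ≥ R` the gap between the
infimum over unit vectors of `Ran Pₙ` and `j_T` at `z` is bounded by the gap at `R z / |z|` plus
`‖T‖² / R`. Quasitriangularity gives the lower bound `j_T ≤ j_{Tₙ} + ‖(1 - Pₙ) T Pₙ‖`, and since
`Pₙ` is a contraction, `j_{Tₙ}(z)` is at most the infimum of `‖(T - z) h‖` over unit vectors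
`h ∈ Ran Pₙ`.
-/

open Metric Topology

theorem LipschitzWith.iInf {α ι : Type*} [PseudoMetricSpace α] {K : NNReal} {f : ι → α → ℝ}
    (hf : ∀ i, LipschitzWith K (f i)) (hbdd : ∀ x, BddBelow (Set.range fun i => f i x)) :
    LipschitzWith K fun x => ⨅ i, f i x := by
  rcases isEmpty_or_nonempty ι with hι | hι
  · simpa only [Real.iInf_of_isEmpty] using LipschitzWith.const' (α := α) (0 : ℝ)
  refine LipschitzWith.of_le_add_mul K fun x y => ?_
  rw [← sub_le_iff_le_add]
  exact le_ciInf fun i => sub_le_iff_le_add.2 <|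
    (ciInf_le (hbdd x) i).trans ((hf i).le_add_mul x y)

theorem IsCompact.eventually_forall_of_forall_eventually_prod {X Y : Type*} [TopologicalSpace Y]
    {l : Filter X} {K : Set Y} (hK : IsCompact K) {P : X → Y → Prop}
    (hP : ∀ y ∈ K, ∀ᶠ p in l ×ˢ 𝓝 y, P p.1 p.2) : ∀ᶠ x in l, ∀ y ∈ K, P x y := by
  have : ∀ᶠ p in l ×ˢ 𝓝ˢ K, P p.1 p.2 := by
    rw [hK.prod_nhdsSet_eq_biSup]
    exact eventually_iSup.2 fun y => eventually_iSup.2 (hP y)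
  exact this.curry.mono fun _ h => h.self_of_nhdsSet

theorem Monotone.eventually_nonempty {α : Type*} {S : ℕ → Set α} (hS : Monotone S)
    (h : (⋃ n, S n).Nonempty) : ∀ᶠ n in atTop, (S n).Nonempty := by
  obtain ⟨x, hx⟩ := h
  obtain ⟨m, hm⟩ := Set.mem_iUnion.1 hx
  filter_upwards [eventually_ge_atTop m] with n hn using ⟨x, hS hn hm⟩

theorem Dense.sphere_subset_closure_inter_sphere {E : Type*} [NormedAddCommGroup E]
    [NormedSpace ℝ E] {s : Set E} (hs : Dense s) (hsmul : ∀ c : ℝ, ∀ x ∈ s, c • x ∈ s) :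
    sphere (0 : E) 1 ⊆ closure (s ∩ sphere 0 1) := by
  intro x hx
  have hx0 : x ≠ 0 := ne_zero_of_mem_unit_sphere ⟨x, hx⟩
  have : Nontrivial E := ⟨⟨x, 0, hx0⟩⟩
  have hcont : ContinuousWithinAt (fun y : E => ‖y‖⁻¹ • y) (s \ {0}) x :=
    ((continuous_norm.continuousAt.inv₀ (norm_ne_zero_iff.2 hx0)).smul
      continuousAt_id).continuousWithinAt
  have hmem := hcont.mem_closure_image ((hs.sdiff_singleton 0).closure_eq ▸ Set.mem_univ x)
  rw [mem_sphere_zero_iff_norm.1 hx, inv_one, one_smul] at hmem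
  refine closure_mono ?_ hmem
  rintro _ ⟨y, ⟨hys, hy0⟩, rfl⟩
  exact ⟨hsmul _ y hys, by simpa using norm_smul_inv_norm (𝕜 := ℝ) hy0⟩

section injRadOn

variable {H : Type*} [NormedAddCommGroup H] [InnerProductSpace ℂ H]

noncomputable def injRadOn (A : H →L[ℂ] H) (S : Set H) (z : ℂ) : ℝ :=
  ⨅ h : S, ‖A h - z • h‖

theorem injRad_eq_injRadOn (T : H →L[ℂ] H) : injRad T = injRadOn T (sphere 0 1) := by
  ext z
  simp only [injRad, injRadOn, iInf]
  congr 1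
  ext r
  simp [eq_comm]

theorem injRadSec_eq_injRadOn (T P : H →L[ℂ] H) :
    injRadSec T P =
      injRadOn (P ∘L T) ((LinearMap.range (P : H →ₗ[ℂ] H) : Set H) ∩ sphere 0 1) := by
  ext z
  simp only [injRadSec, injRadOn, iInf]
  congr 1
  ext r
  simp [eq_comm, and_assoc]

theorem injRadOn_empty (A : H →L[ℂ] H) (z : ℂ) : injRadOn A ∅ z = 0 :=
  Real.iInf_of_isEmpty _

theorem bddBelow_range_norm_sub_smul (A : H →L[ℂ] H) (S : Set H) (z : ℂ) :
    BddBelow (Set.range fun h : S => ‖A h - z • h‖) :=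
  ⟨0, by rintro _ ⟨h, rfl⟩; positivity⟩

variable {A : H →L[ℂ] H} {S : Set H}

theorem injRadOn_le {h : H} (hh : h ∈ S) (z : ℂ) : injRadOn A S z ≤ ‖A h - z • h‖ :=
  ciInf_le (bddBelow_range_norm_sub_smul A S z) ⟨h, hh⟩

theorem le_injRadOn {c : ℝ} {z : ℂ} (hS : S.Nonempty) (hc : ∀ h ∈ S, c ≤ ‖A h - z • h‖) :
    c ≤ injRadOn A S z :=
  have : Nonempty S := hS.to_subtype
  le_ciInf fun h => hc h h.2

theorem injRadOn_anti {S' : Set H} (hSS' : S ⊆ S') (hS : S.Nonempty) (z : ℂ) :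
    injRadOn A S' z ≤ injRadOn A S z :=
  le_injRadOn hS fun _ hh => injRadOn_le (hSS' hh) z

theorem injRadOn_mono_left {B : H →L[ℂ] H} {z : ℂ}
    (hAB : ∀ h ∈ S, ‖A h - z • h‖ ≤ ‖B h - z • h‖) :
    injRadOn A S z ≤ injRadOn B S z :=
  ciInf_mono (bddBelow_range_norm_sub_smul A S z) fun h => hAB h h.2

theorem injRadOn_le_injRadOn_add {B : H →L[ℂ] H} {S' : Set H} {δ : ℝ} (hSS' : S ⊆ S')
    (hS : S.Nonempty) (hAB : ∀ h ∈ S, ‖A h - B h‖ ≤ δ) (z : ℂ) :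
    injRadOn A S' z ≤ injRadOn B S z + δ := by
  rw [← sub_le_iff_le_add]
  refine le_injRadOn hS fun h hh => sub_le_iff_le_add.2 ?_
  calc injRadOn A S' z ≤ ‖A h - z • h‖ := injRadOn_le (hSS' hh) z
    _ = ‖(B h - z • h) + (A h - B h)‖ := by congr 1; abel
    _ ≤ ‖B h - z • h‖ + δ := (norm_add_le _ _).trans (by linarith [hAB h hh])

theorem lipschitzWith_injRadOn (hS : S ⊆ sphere 0 1) : LipschitzWith 1 (injRadOn A S) := by
  refine LipschitzWith.iInf (fun h => LipschitzWith.of_dist_le_mul fun z z' => ?_)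
    (bddBelow_range_norm_sub_smul A S)
  calc dist ‖A h - z • h‖ ‖A h - z' • h‖ ≤ ‖(A h - z • h) - (A h - z' • h)‖ :=
        dist_norm_norm_le _ _
    _ = 1 * dist z z' := by
      rw [sub_sub_sub_cancel_left, ← sub_smul, norm_smul, mem_sphere_zero_iff_norm.1 (hS h.2),
        dist_comm, dist_eq_norm, mul_one, one_mul]

end injRadOn

section radial

variable {H : Type*} [NormedAddCommGroup H] [InnerProductSpace ℂ H]

/-- Both sides are compared with `-re ⟪b, a⟫`, which bounds `‖a - t b‖ - t` from below for every
`t` and is attained up to `‖a‖² / R` at `t = R`. -/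
theorem norm_sub_ofReal_smul_sub_le {a b : H} (hb : ‖b‖ = 1) (t : ℝ) {R : ℝ} (hR : 0 < R)
    (haR : 2 * ‖a‖ ≤ R) :
    ‖a - (R : ℂ) • b‖ - R ≤ ‖a - (t : ℂ) • b‖ - t + ‖a‖ ^ 2 / R := by
  set s := (inner ℂ b a).re
  have hs : s ≤ ‖a‖ := by
    calc s ≤ ‖inner ℂ b a‖ := Complex.re_le_norm _
      _ ≤ ‖b‖ * ‖a‖ := norm_inner_le_norm _ _
      _ = ‖a‖ := by rw [hb, one_mul]
  have hray : ∀ r : ℝ, r - s ≤ ‖a - (r : ℂ) • b‖ := fun r => by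
    calc r - s = (inner ℂ b ((r : ℂ) • b - a)).re := by
          rw [inner_sub_right, inner_smul_right, inner_self_eq_norm_sq_to_K, hb]; simp [s]
      _ ≤ ‖inner ℂ b ((r : ℂ) • b - a)‖ := Complex.re_le_norm _
      _ ≤ ‖b‖ * ‖(r : ℂ) • b - a‖ := norm_inner_le_norm _ _
      _ = ‖a - (r : ℂ) • b‖ := by rw [hb, one_mul, norm_sub_rev]
  have hsq : ‖a - (R : ℂ) • b‖ ^ 2 = ‖a‖ ^ 2 - 2 * R * s + R ^ 2 := by
    have hre : (inner ℂ a b).re = s := inner_re_symm (𝕜 := ℂ) a b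
    rw [@norm_sub_sq ℂ, inner_smul_right, norm_smul, hb]
    simp [hre]
    ring
  have hR_ray := hray R
  have ht_ray := hray t
  have hgap : (‖a - (R : ℂ) • b‖ - R + s) * R ≤ ‖a‖ ^ 2 := by
    nlinarith [sq_nonneg s]
  have := (le_div_iff₀ hR).2 hgap
  linarith

theorem injRad_smul_sub_le (T : H →L[ℂ] H) (hne : (sphere (0 : H) 1).Nonempty) {R : ℝ}
    (hR : 0 < R) (hTR : 2 * ‖T‖ ≤ R) {z : ℂ} (hz : z ≠ 0) :
    injRad T ((R / ‖z‖) • z) - R ≤ injRad T z - ‖z‖ + ‖T‖ ^ 2 / R := by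
  rw [injRad_eq_injRadOn]
  suffices injRadOn T (sphere 0 1) ((R / ‖z‖) • z) - R - ‖T‖ ^ 2 / R + ‖z‖ ≤
      injRadOn T (sphere 0 1) z by linarith
  refine le_injRadOn hne fun h hh => ?_
  have hh1 : ‖h‖ = 1 := mem_sphere_zero_iff_norm.1 hh
  have hz0 : (‖z‖ : ℂ) ≠ 0 := by exact_mod_cast norm_ne_zero_iff.2 hz
  set b := (z / ‖z‖) • h
  have hb : ‖b‖ = 1 := by simp [b, norm_smul, hh1, hz]
  have hRb : ((R / ‖z‖) • z) • h = (R : ℂ) • b := by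
    rw [smul_smul, Complex.real_smul]; push_cast; ring_nf
  have hzb : z • h = (‖z‖ : ℂ) • b := by
    rw [smul_smul, mul_div_cancel₀ _ hz0]
  have hTh : ‖T h‖ ≤ ‖T‖ := by simpa [hh1] using T.le_opNorm h
  have hray := norm_sub_ofReal_smul_sub_le hb ‖z‖ hR (by linarith)
  calc injRadOn T (sphere 0 1) ((R / ‖z‖) • z) - R - ‖T‖ ^ 2 / R + ‖z‖
      ≤ ‖T h - (R : ℂ) • b‖ - R - ‖T h‖ ^ 2 / R + ‖z‖ := by
        have hle := injRadOn_le hh ((R / ‖z‖) • z) (A := T)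
        rw [hRb] at hle
        have hT2 : ‖T h‖ ^ 2 / R ≤ ‖T‖ ^ 2 / R := by gcongr
        linarith
    _ ≤ ‖T h - z • h‖ := by rw [hzb]; linarith

theorem injRadOn_sub_injRad_le (T : H →L[ℂ] H) {S : Set H} (hS : S ⊆ sphere 0 1)
    (hne : (sphere (0 : H) 1).Nonempty) {R : ℝ} (hR : 0 < R) (hTR : 2 * ‖T‖ ≤ R) {z : ℂ}
    (hRz : R ≤ ‖z‖) :
    injRadOn T S z - injRad T z ≤
      injRadOn T S ((R / ‖z‖) • z) - injRad T ((R / ‖z‖) • z) + ‖T‖ ^ 2 / R := by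
  have hz : 0 < ‖z‖ := hR.trans_le hRz
  have hdist : dist z ((R / ‖z‖) • z) = ‖z‖ - R := by
    rw [dist_eq_norm, ← one_smul ℝ z, smul_smul, ← sub_smul, one_smul, mul_one, norm_smul,
      Real.norm_of_nonneg (sub_nonneg.2 ((div_le_one hz).2 hRz)), sub_mul, one_mul,
      div_mul_cancel₀ _ hz.ne']
  have hlip := (lipschitzWith_injRadOn (A := T) hS).le_add_mul z ((R / ‖z‖) • z)
  have hradial := injRad_smul_sub_le T hne hR hTR (norm_pos_iff.1 hz)
  rw [hdist, NNReal.coe_one, one_mul] at hlip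
  linarith

end radial

section convergence

variable {H : Type*} [NormedAddCommGroup H] [InnerProductSpace ℂ H] (T : H →L[ℂ] H)

theorem lipschitzWith_injRad : LipschitzWith 1 (injRad T) :=
  injRad_eq_injRadOn T ▸ lipschitzWith_injRadOn subset_rfl

theorem exists_mem_norm_sub_smul_lt_injRad_add {D : Set H} (hD : sphere (0 : H) 1 ⊆ closure D)
    (hne : (sphere (0 : H) 1).Nonempty) (z : ℂ) {ε : ℝ} (hε : 0 < ε) :
    ∃ g ∈ D, ‖T g - z • g‖ < injRad T z + ε := by
  have : Nonempty (sphere (0 : H) 1) := hne.to_subtype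
  obtain ⟨⟨h, hh⟩, hlt⟩ : ∃ h : sphere (0 : H) 1, ‖T h - z • h‖ < injRad T z + ε := by
    rw [injRad_eq_injRadOn]
    exact exists_lt_of_ciInf_lt (lt_add_of_pos_right _ hε)
  obtain ⟨g, hgU, hgD⟩ := mem_closure_iff.1 (hD hh) {x | ‖T x - z • x‖ < injRad T z + ε}
    (isOpen_lt (by fun_prop) continuous_const) hlt
  exact ⟨g, hgD, hgU⟩

variable {S : ℕ → Set H}

theorem eventually_forall_closedBall_injRadOn_lt (hS_mono : Monotone S)
    (hS_dense : sphere (0 : H) 1 ⊆ closure (⋃ n, S n)) (hne : (sphere (0 : H) 1).Nonempty)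
    (R : ℝ) {ε : ℝ} (hε : 0 < ε) :
    ∀ᶠ n in atTop, ∀ z ∈ closedBall (0 : ℂ) R, injRadOn T (S n) z < injRad T z + ε := by
  refine (isCompact_closedBall 0 R).eventually_forall_of_forall_eventually_prod fun z₀ _ => ?_
  obtain ⟨g, hg, hlt⟩ := exists_mem_norm_sub_smul_lt_injRad_add T hS_dense hne z₀ hε
  obtain ⟨m, hgm⟩ := Set.mem_iUnion.1 hg
  have hcont : Continuous fun z : ℂ => ‖T g - z • g‖ - injRad T z := by
    have := (lipschitzWith_injRad T).continuous
    fun_prop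
  have hnear : ∀ᶠ z in 𝓝 z₀, ‖T g - z • g‖ - injRad T z < ε :=
    hcont.continuousAt (gt_mem_nhds (by linarith))
  filter_upwards [(eventually_ge_atTop m).prod_mk hnear] with ⟨n, z⟩ ⟨hmn, hz⟩
  exact (injRadOn_le (hS_mono hmn hgm) z).trans_lt (by linarith)

theorem tendstoUniformly_injRadOn (hS_mono : Monotone S) (hS_sphere : ∀ n, S n ⊆ sphere 0 1)
    (hS_dense : sphere (0 : H) 1 ⊆ closure (⋃ n, S n)) (hne : (sphere (0 : H) 1).Nonempty) :
    TendstoUniformly (fun n => injRadOn T (S n)) (injRad T) atTop := by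
  rw [Metric.tendstoUniformly_iff]
  intro ε hε
  obtain ⟨R, hR, hTR, hRε⟩ : ∃ R : ℝ, 0 < R ∧ 2 * ‖T‖ ≤ R ∧ ‖T‖ ^ 2 / R < ε / 2 :=
    ((eventually_gt_atTop 0).and ((eventually_ge_atTop _).and
      ((tendsto_const_nhds.div_atTop tendsto_id).eventually (gt_mem_nhds (half_pos hε))))).exists
  filter_upwards
    [eventually_forall_closedBall_injRadOn_lt T hS_mono hS_dense hne R (half_pos hε),
    hS_mono.eventually_nonempty (hne.mono hS_dense).of_closure] with n hnear hSn z
  have hlow : injRad T z ≤ injRadOn T (S n) z :=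
    injRad_eq_injRadOn T ▸ injRadOn_anti (hS_sphere n) hSn z
  have hup : injRadOn T (S n) z < injRad T z + ε := by
    rcases le_or_gt ‖z‖ R with hz | hz
    · linarith [hnear z (mem_closedBall_zero_iff.2 hz)]
    · have hfar := injRadOn_sub_injRad_le T (hS_sphere n) hne hR hTR hz.le
      have := hnear ((R / ‖z‖) • z) <| mem_closedBall_zero_iff.2 <| by
        rw [norm_smul, Real.norm_of_nonneg (by positivity), div_mul_cancel₀ _ (hR.trans hz).ne']
      linarith
  rw [Real.dist_eq, abs_sub_lt_iff]
  constructor <;> linarith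

end convergence

section projection

variable {H : Type*} [NormedAddCommGroup H] [InnerProductSpace ℂ H] {T P : H →L[ℂ] H}

theorem injRad_le_injRadSec_add (hP : IsIdempotentElem P)
    (hne : ((LinearMap.range (P : H →ₗ[ℂ] H) : Set H) ∩ sphere 0 1).Nonempty) (z : ℂ) :
    injRad T z ≤ injRadSec T P z + ‖((1 : H →L[ℂ] H) - P) ∘L T ∘L P‖ := by
  rw [injRad_eq_injRadOn, injRadSec_eq_injRadOn]
  refine injRadOn_le_injRadOn_add Set.inter_subset_right hne (fun h ⟨hmem, hh⟩ => ?_) z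
  have hPh : P h = h :=
    (LinearMap.IsIdempotentElem.mem_range_iff (IsIdempotentElem.toLinearMap hP)).1 hmem
  calc ‖T h - (P ∘L T) h‖ = ‖(((1 : H →L[ℂ] H) - P) ∘L T ∘L P) h‖ := by simp [hPh]
    _ ≤ ‖((1 : H →L[ℂ] H) - P) ∘L T ∘L P‖ := by
      simpa [mem_sphere_zero_iff_norm.1 hh] using
        le_opNorm (((1 : H →L[ℂ] H) - P) ∘L T ∘L P) h

theorem injRadSec_le_injRadOn [CompleteSpace H] (hP : IsStarProjection P) (z : ℂ) :
    injRadSec T P z ≤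
      injRadOn T ((LinearMap.range (P : H →ₗ[ℂ] H) : Set H) ∩ sphere 0 1) z := by
  rw [injRadSec_eq_injRadOn]
  refine injRadOn_mono_left fun h ⟨hmem, _⟩ => ?_
  have hPh : P h = h :=
    (LinearMap.IsIdempotentElem.mem_range_iff
      (IsIdempotentElem.toLinearMap hP.isIdempotentElem)).1 hmem
  calc ‖(P ∘L T) h - z • h‖ = ‖P (T h - z • h)‖ := by rw [map_sub, map_smul, hPh]; rfl
    _ ≤ ‖T h - z • h‖ := (P.le_of_opNorm_le hP.norm_le _).trans_eq (one_mul _)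

end projection

namespace Filtration

variable {H : Type*} [NormedAddCommGroup H] [InnerProductSpace ℂ H] [CompleteSpace H]
  (F : Filtration H)

def unitSphere (n : ℕ) : Set H :=
  (LinearMap.range (F.P n : H →ₗ[ℂ] H) : Set H) ∩ sphere 0 1

theorem isStarProjection (n : ℕ) : IsStarProjection (F.P n) :=
  ⟨F.idem n, F.selfadj n⟩

theorem monotone_unitSphere : Monotone F.unitSphere := fun _ _ hmn =>
  Set.inter_subset_inter_left _ (monotone_nat_of_le_succ F.mono hmn)

theorem sphere_subset_closure_iUnion_unitSphere :
    sphere (0 : H) 1 ⊆ closure (⋃ n, F.unitSphere n) := by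
  simp only [unitSphere, ← Set.iUnion_inter]
  refine F.dense.sphere_subset_closure_inter_sphere fun c x hx => ?_
  obtain ⟨n, hn⟩ := Set.mem_iUnion.1 hx
  exact Set.mem_iUnion.2 ⟨n, Submodule.smul_of_tower_mem _ c hn⟩

end Filtration

theorem injRadSec_tendstoUniformly {H : Type*} [NormedAddCommGroup H] [InnerProductSpace ℂ H] [CompleteSpace H]
    (T : H →L[ℂ] H) (F : Filtration H)
    (hF : Tendsto (fun n => ‖((1 : H →L[ℂ] H) - F.P n) ∘L T ∘L F.P n‖) atTop (nhds 0)) :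
    TendstoUniformly (fun n z => injRadSec T (F.P n) z) (injRad T) atTop := by
  rcases (sphere (0 : H) 1).eq_empty_or_nonempty with hH | hH
  · refine Metric.tendstoUniformly_iff.2 fun ε hε => Eventually.of_forall fun n z => ?_
    simp [injRad_eq_injRadOn, injRadSec_eq_injRadOn, hH, injRadOn_empty, hε]
  have hconv := tendstoUniformly_injRadOn T F.monotone_unitSphere
    (fun _ => Set.inter_subset_right) F.sphere_subset_closure_iUnion_unitSphere hH
  rw [Metric.tendstoUniformly_iff] at hconv ⊢
  intro ε hε
  filter_upwards [hconv ε hε, hF.eventually (gt_mem_nhds hε),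
    F.monotone_unitSphere.eventually_nonempty
      (hH.mono F.sphere_subset_closure_iUnion_unitSphere).of_closure] with n hn hδ hSn z
  have hlow := injRad_le_injRadSec_add (T := T) (F.isStarProjection n).isIdempotentElem hSn z
  have hup : injRadSec T (F.P n) z ≤ injRadOn T (F.unitSphere n) z :=
    injRadSec_le_injRadOn (F.isStarProjection n) z
  have hdist := hn z
  rw [Real.dist_eq, abs_sub_lt_iff] at hdist ⊢
  constructor <;> linarith
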